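/- Combining the previous two results: if w̃ globally minimizes θ·L_K + (1−θ)·L_A where L_K(w) = D_KL(f_w ‖ u) for the uniform distribution u on K classes, L_A ≥ 0, and there exists w_U with L_K(w_U)=0 and L_A(w_U)=R·ln K, then ‖f_{w̃} − u‖_∞ ≤ √(2·((1−θ)/θ)·R·ln K). -/

import Mathlib

/-!
Comparing the minimiser with `w_U` bounds the KL divergence of `f_{w̃}` from `u` by
`((1 - θ)/θ) R ln K`. Writing the KL divergence as `∑ᵢ qᵢ·klFun (pᵢ/qᵢ)`, a sum of nonnegative
terms, it dominates each single term, and the elementary estimates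
`klFun t ≥ (t - 1)²/2` on `[0, 1]` and `klFun t ≥ (t - 1)²/(2t)` on `[1, ∞)` turn the `j`-th term
into `(pⱼ - qⱼ)²/2` because both `pⱼ` and `qⱼ` are at most `1`.
-/

open Real InformationTheory Finset

lemma Real.log_le_sub_inv_div_two {u : ℝ} (hu : 1 ≤ u) : log u ≤ (u - u⁻¹) / 2 := by
  have hu0 : 0 < u := by linarith
  have hy : 0 ≤ (u - u⁻¹) / 2 := by
    have := inv_le_one_of_one_le₀ hu
    linarith
  rw [log_le_iff_le_exp hu0]
  calc u ≤ u + (u - 1) ^ 4 / (8 * u ^ 2) := le_add_of_nonneg_right (by positivity)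
    _ = 1 + (u - u⁻¹) / 2 + ((u - u⁻¹) / 2) ^ 2 / 2 := by field_simp; ring
    _ ≤ exp ((u - u⁻¹) / 2) := quadratic_le_exp_of_nonneg hy

namespace InformationTheory

lemma sq_sub_one_div_two_le_klFun {t : ℝ} (h0 : 0 ≤ t) (h1 : t ≤ 1) :
    (t - 1) ^ 2 / 2 ≤ klFun t := by
  rcases h0.eq_or_lt with rfl | ht
  · norm_num [klFun_zero]
  have hlog : -((t⁻¹ - t) / 2) ≤ log t := by
    rw [← neg_neg (log t), ← log_inv, neg_le_neg_iff]
    simpa using log_le_sub_inv_div_two (one_le_inv₀ ht |>.2 h1)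
  rw [klFun_apply]
  calc (t - 1) ^ 2 / 2 = t * -((t⁻¹ - t) / 2) + 1 - t := by field_simp; ring
    _ ≤ t * log t + 1 - t := by gcongr

lemma sq_sub_one_div_two_mul_le_klFun {t : ℝ} (h1 : 1 ≤ t) :
    (t - 1) ^ 2 / (2 * t) ≤ klFun t := by
  have ht : 0 < t := by linarith
  have hlog : 2 * (t - 1) / (t + 1) ≤ log t := by
    convert le_log_one_add_of_nonneg (sub_nonneg.2 h1) using 2 <;> ring
  have hcube : 0 ≤ (t - 1) ^ 3 / (2 * t * (t + 1)) :=
    div_nonneg (pow_nonneg (sub_nonneg.2 h1) 3) (by positivity)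
  rw [klFun_apply]
  calc (t - 1) ^ 2 / (2 * t) ≤ (t - 1) ^ 2 / (2 * t) + (t - 1) ^ 3 / (2 * t * (t + 1)) :=
        le_add_of_nonneg_right hcube
    _ = t * (2 * (t - 1) / (t + 1)) + 1 - t := by field_simp; ring
    _ ≤ t * log t + 1 - t := by gcongr

lemma sq_sub_div_two_le_mul_klFun_div {p q : ℝ} (hp0 : 0 ≤ p) (hp1 : p ≤ 1) (hq0 : 0 < q)
    (hq1 : q ≤ 1) : (p - q) ^ 2 / 2 ≤ q * klFun (p / q) := by
  rcases le_total p q with hpq | hqp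
  · have hsq : q * (p / q - 1) ^ 2 = (p - q) ^ 2 / q := by field_simp
    have h := mul_le_mul_of_nonneg_left
      (sq_sub_one_div_two_le_klFun (div_nonneg hp0 hq0.le) ((div_le_one hq0).2 hpq)) hq0.le
    calc (p - q) ^ 2 / 2 ≤ (p - q) ^ 2 / q / 2 := by
          gcongr
          exact le_div_self (sq_nonneg _) hq0 hq1
      _ = q * ((p / q - 1) ^ 2 / 2) := by rw [← hsq]; ring
      _ ≤ q * klFun (p / q) := h
  · have hp : 0 < p := hq0.trans_le hqp
    have h := mul_le_mul_of_nonneg_left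
      (sq_sub_one_div_two_mul_le_klFun ((one_le_div hq0).2 hqp)) hq0.le
    calc (p - q) ^ 2 / 2 ≤ (p - q) ^ 2 / (2 * p) := by
          gcongr
          linarith
      _ = q * ((p / q - 1) ^ 2 / (2 * (p / q))) := by field_simp
      _ ≤ q * klFun (p / q) := h

lemma sum_mul_log_div_eq_sum_mul_klFun {ι : Type*} [Fintype ι] {p q : ι → ℝ}
    (hq : ∀ i, 0 < q i) (hpq : ∑ i, p i = ∑ i, q i) :
    ∑ i, p i * log (p i / q i) = ∑ i, q i * klFun (p i / q i) := by
  have hterm : ∀ i, q i * klFun (p i / q i) = p i * log (p i / q i) + (q i - p i) := by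
    intro i
    have := (hq i).ne'
    rw [klFun_apply]
    field_simp
    ring
  simp only [hterm, sum_add_distrib, sum_sub_distrib, hpq, sub_self, add_zero]

lemma sq_sub_div_two_le_sum_mul_log_div {ι : Type*} [Fintype ι] {p q : ι → ℝ}
    (hp : ∀ i, 0 ≤ p i) (hq : ∀ i, 0 < q i) (hp1 : ∑ i, p i = 1) (hq1 : ∑ i, q i = 1) (j : ι) :
    (p j - q j) ^ 2 / 2 ≤ ∑ i, p i * log (p i / q i) := by
  have hpj : p j ≤ 1 := hp1 ▸ single_le_sum (fun i _ => hp i) (mem_univ j)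
  have hqj : q j ≤ 1 := hq1 ▸ single_le_sum (fun i _ => (hq i).le) (mem_univ j)
  rw [sum_mul_log_div_eq_sum_mul_klFun hq (hp1.trans hq1.symm)]
  calc (p j - q j) ^ 2 / 2 ≤ q j * klFun (p j / q j) :=
        sq_sub_div_two_le_mul_klFun_div (hp j) hpj (hq j) hqj
    _ ≤ ∑ i, q i * klFun (p i / q i) :=
        single_le_sum (fun i _ => mul_nonneg (hq i).le
          (klFun_nonneg (div_nonneg (hp i) (hq i).le))) (mem_univ j)

end InformationTheory

theorem output_close_to_uniform_general {W : Type*} (K : ℕ)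
    (f : W → Fin K → ℝ) (hf0 : ∀ w j, 0 ≤ f w j) (hf1 : ∀ w, ∑ j, f w j = 1)
    (LK LA : W → ℝ)
    (hLK : ∀ w, LK w = ∑ j : Fin K, f w j * Real.log (f w j / (1 / K)))
    (hLA0 : ∀ w, 0 ≤ LA w)
    (θ R : ℝ) (hθ : θ ∈ Set.Ioo (0 : ℝ) 1)
    (wU : W) (hU1 : LK wU = 0) (hU2 : LA wU = R * Real.log K)
    (wt : W) (hmin : ∀ w : W, θ * LK wt + (1 - θ) * LA wt ≤ θ * LK w + (1 - θ) * LA w) :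
    ∀ j : Fin K, |f wt j - 1 / K| ≤ Real.sqrt (2 * ((1 - θ) / θ) * R * Real.log K) := by
  intro j
  obtain ⟨hθ0, hθ1⟩ := hθ
  have hK : (0 : ℝ) < K := Nat.cast_pos.2 j.pos
  have hLK_wt : LK wt ≤ (1 - θ) / θ * (R * log K) := by
    rw [div_mul_eq_mul_div, le_div_iff₀ hθ0]
    have hcompare := hmin wU
    rw [hU1, hU2] at hcompare
    linarith [mul_nonneg (sub_pos.2 hθ1).le (hLA0 wt)]
  have hpinsker : (f wt j - 1 / K) ^ 2 / 2 ≤ LK wt := by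
    rw [hLK wt]
    refine sq_sub_div_two_le_sum_mul_log_div (hf0 wt) (fun _ => one_div_pos.2 hK) (hf1 wt) ?_ j
    simp [hK.ne']
  apply Real.abs_le_sqrt
  linarith

/-- If w̃ globally minimizes θ·L_K + (1−θ)·L_A, where L_K is the KL divergence of the
model output to the uniform distribution on K classes, L_A ≥ 0, and some w_U attains
L_K(w_U) = 0 with L_A(w_U) = R·ln K, then ‖f_{w̃} − u‖_∞ ≤ √(2((1−θ)/θ)R·ln K). -/
theorem output_close_to_uniform {W : Type*} (K : ℕ) (hK : 1 < K)
    (f : W → Fin K → ℝ) (hf0 : ∀ w j, 0 ≤ f w j) (hf1 : ∀ w, ∑ j, f w j = 1)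
    (LK LA : W → ℝ)
    (hLK : ∀ w, LK w = ∑ j : Fin K, f w j * Real.log (f w j / (1 / K)))
    (hLA0 : ∀ w, 0 ≤ LA w)
    (θ R : ℝ) (hθ : θ ∈ Set.Ioo (0 : ℝ) 1) (hR : 0 < R)
    (wU : W) (hU1 : LK wU = 0) (hU2 : LA wU = R * Real.log K)
    (wt : W) (hmin : ∀ w : W, θ * LK wt + (1 - θ) * LA wt ≤ θ * LK w + (1 - θ) * LA w) :
    ∀ j : Fin K, |f wt j - 1 / K| ≤ Real.sqrt (2 * ((1 - θ) / θ) * R * Real.log K) :=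
  output_close_to_uniform_general K f hf0 hf1 LK LA hLK hLA0 θ R hθ wU hU1 hU2 wt hmin
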